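/- Let n be a positive even integer. Then N(1,1,10,10;n) = N(2,2,5,5;n). -/
import Mathlib


open PowerSeries

/-- Number of representations of `n` by `a₁x₁² + a₂x₂² + a₃x₃² + a₄x₄²` over `ℤ`. -/
noncomputable def repCount (a₁ a₂ a₃ a₄ : ℕ) (n : ℕ) : ℕ :=
  Nat.card {x : ℤ × ℤ × ℤ × ℤ //
    (n : ℤ) = a₁ * x.1 ^ 2 + a₂ * x.2.1 ^ 2 + a₃ * x.2.2.1 ^ 2 + a₄ * x.2.2.2 ^ 2}

lemma repCount_swap (a b c d n : ℕ) : repCount a b c d n = repCount c d a b n := by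
  apply Nat.card_congr
  refine ⟨fun x => ⟨(x.1.2.2.1, x.1.2.2.2, x.1.1, x.1.2.1), by linear_combination x.2⟩,
    fun x => ⟨(x.1.2.2.1, x.1.2.2.2, x.1.1, x.1.2.1), by linear_combination x.2⟩,
    fun x => Subtype.ext rfl, fun x => Subtype.ext rfl⟩

lemma repCount_double (e c d n : ℕ) (he : Odd e) (hc : 2 ∣ c) (hd : 2 ∣ d)
    (hev : Even n) : repCount e e c d n = repCount (2*e) (2*e) c d n := by
  symm
  apply Nat.card_congr
  apply Equiv.ofBijective
    (f := fun y => (⟨(y.1.1 + y.1.2.1, y.1.1 - y.1.2.1, y.1.2.2.1, y.1.2.2.2), by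
      have h := y.2; push_cast at h ⊢; linear_combination h⟩ :
      {x : ℤ × ℤ × ℤ × ℤ //
        (n : ℤ) = e * x.1 ^ 2 + e * x.2.1 ^ 2 + c * x.2.2.1 ^ 2 + d * x.2.2.2 ^ 2}))
  constructor
  · rintro ⟨⟨a1, a2, a3, a4⟩, ha⟩ ⟨⟨b1, b2, b3, b4⟩, hb⟩ h
    simp only [Subtype.mk.injEq, Prod.mk.injEq] at h ⊢
    obtain ⟨h1, h2, h3, h4⟩ := h
    refine ⟨by linarith, by linarith, h3, h4⟩
  · rintro ⟨⟨x1, x2, x3, x4⟩, hx⟩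
    -- parity: x1 + x2 is even
    obtain ⟨c', rfl⟩ := hc
    obtain ⟨d', rfl⟩ := hd
    obtain ⟨m, rfl⟩ := hev
    obtain ⟨k, hk⟩ := he
    have hpar : Even (x1 + x2) := by
      have h2 : Even ((e : ℤ) * (x1 ^ 2 + x2 ^ 2)) := by
        have : (e : ℤ) * (x1 ^ 2 + x2 ^ 2) =
            ((m + m : ℕ) : ℤ) - 2 * (c' * x3 ^ 2) - 2 * (d' * x4 ^ 2) := by
          push_cast at hx ⊢; linarith
        rw [this]
        refine Even.sub (Even.sub ⟨m, by push_cast; ring⟩ ⟨c' * x3 ^ 2, by ring⟩)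
          ⟨d' * x4 ^ 2, by ring⟩
      have heo : Odd (e : ℤ) := ⟨k, by push_cast [hk]; ring⟩
      have hsq : Even (x1 ^ 2 + x2 ^ 2) := by
        rcases Int.even_mul.mp h2 with h | h
        · exact absurd h (Int.not_even_iff_odd.mpr heo)
        · exact h
      have : Even x1 ↔ Even x2 := by
        rw [Int.even_add] at hsq
        simpa [Int.even_pow] using hsq
      rw [Int.even_add]; exact this
    obtain ⟨u, hu⟩ := hpar
    refine ⟨⟨(u, x1 - u, x3, x4), ?_⟩, ?_⟩
    · have : x2 = u + u - x1 := by linarith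
      subst this
      push_cast at hx ⊢
      linarith [hx]
    · apply Subtype.ext
      have e1 : u + (x1 - u) = x1 := by ring
      have e2 : u - (x1 - u) = x2 := by omega
      simp [Prod.ext_iff, e1, e2]

theorem stmt0 (n : ℕ) (hn : 0 < n) (hev : Even n) :
    repCount 1 1 10 10 n = repCount 2 2 5 5 n := by
  have h1 : repCount 1 1 10 10 n = repCount 2 2 10 10 n := by
    have := repCount_double 1 10 10 n ⟨0, rfl⟩ (by norm_num) (by norm_num) hev
    simpa using this
  have h2 : repCount 5 5 2 2 n = repCount 10 10 2 2 n := by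
    have := repCount_double 5 2 2 n ⟨2, rfl⟩ (by norm_num) (by norm_num) hev
    simpa using this
  rw [h1, repCount_swap 2 2 5 5, h2, repCount_swap 10 10 2 2]
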